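/- Let A(β) = [[1, e^{−β}], [e^{−β}, 1]] for a fixed β ∈ ℝ. Suppose (ψ^j)_{j≥0} is a sequence of vectors in [0,∞)² with ψ^0 = 1 (a fixed scalar, interpreting ψ^0 ∈ [0,∞) as the image under the row vector (1,1)) such that ψ^0 = ψ^1_1 + ψ^1_2 and ψ^j = A(β) ψ^{j+1} for all j ≥ 1. Then this sequence is unique; in particular ψ^n has both coordinates equal to (Σ_v ψ^n_v)/2 for all n ≥ 1. -/
import Mathlib


/-- Uniqueness of the normalized element of the inverse limit along
`A(β) = [[1, e^{−β}], [e^{−β}, 1]]`: a nonnegative sequence with `ψ^1_1 + ψ^1_2 = 1` and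
`ψ^j = A(β) ψ^{j+1}` for `j ≥ 1` necessarily satisfies
`ψ^n = ((1+e^{−β})^{1−n}/2, (1+e^{−β})^{1−n}/2)` for all `n ≥ 1`. -/
theorem stmt_12 (β : ℝ) (ψ : ℕ → Fin 2 → ℝ)
    (hnn : ∀ j i, 0 ≤ ψ j i)
    (hnorm : ψ 1 0 + ψ 1 1 = 1)
    (hproj : ∀ j, 1 ≤ j →
      ψ j = (!![1, Real.exp (-β); Real.exp (-β), 1]).mulVec (ψ (j + 1))) :
    ∀ n : ℕ, 1 ≤ n → ∀ i, ψ n i = (1 + Real.exp (-β)) ^ ((1 : ℤ) - n) / 2 := by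
  set x := Real.exp (-β) with hxdef
  have hx : 0 < x := Real.exp_pos _
  have hA : ∀ j, 1 ≤ j → ψ j 0 = ψ (j+1) 0 + x * ψ (j+1) 1 ∧
      ψ j 1 = x * ψ (j+1) 0 + ψ (j+1) 1 := by
    intro j hj
    have h := hproj j hj
    constructor
    · have h0 := congrFun h 0
      simpa [Matrix.mulVec, dotProduct, Fin.sum_univ_two] using h0
    · have h1 := congrFun h 1
      simpa [Matrix.mulVec, dotProduct, Fin.sum_univ_two] using h1
  have hs : ∀ k : ℕ, (1+x)^k * (ψ (k+1) 0 + ψ (k+1) 1) = 1 := by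
    intro k
    induction k with
    | zero => simpa using hnorm
    | succ k ih =>
      obtain ⟨h0, h1⟩ := hA (k+1) (by omega)
      calc (1+x)^(k+1) * (ψ (k+1+1) 0 + ψ (k+1+1) 1)
          = (1+x)^k * ((ψ (k+1+1) 0 + x * ψ (k+1+1) 1)
              + (x * ψ (k+1+1) 0 + ψ (k+1+1) 1)) := by ring
        _ = (1+x)^k * (ψ (k+1) 0 + ψ (k+1) 1) := by rw [← h0, ← h1]
        _ = 1 := ih
  have hd : ∀ n, 1 ≤ n → ∀ k : ℕ,
      ψ n 0 - ψ n 1 = (1-x)^k * (ψ (n+k) 0 - ψ (n+k) 1) := by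
    intro n hn k
    induction k with
    | zero => simp
    | succ k ih =>
      obtain ⟨h0, h1⟩ := hA (n+k) (by omega)
      have hstep : ψ (n+k) 0 - ψ (n+k) 1
          = (1-x) * (ψ (n+k+1) 0 - ψ (n+k+1) 1) := by
        rw [h0, h1]; ring
      rw [ih, hstep, ← add_assoc]
      ring
  have hd0 : ∀ n, 1 ≤ n → ψ n 0 = ψ n 1 := by
    intro n hn
    set r : ℝ := |1-x| / (1+x) with hrdef
    have hr0 : 0 ≤ r := by positivity
    have hr1 : r < 1 := by
      rw [hrdef, div_lt_one (by linarith)]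
      rcases abs_cases (1-x) with ⟨h, _⟩ | ⟨h, _⟩ <;> rw [h] <;> linarith
    have key : ∀ k : ℕ, |ψ n 0 - ψ n 1| ≤ r^k := by
      intro k
      have h1 := hd n hn k
      have hsm : (1+x)^(n+k-1) * (ψ (n+k) 0 + ψ (n+k) 1) = 1 := by
        have := hs (n+k-1)
        rwa [show n+k-1+1 = n+k by omega] at this
      have hpos : (0:ℝ) < (1+x)^k := by positivity
      have hmono : (1+x)^k ≤ (1+x)^(n+k-1) :=
        pow_le_pow_right₀ (by linarith) (by omega)
      have hsum_nn : 0 ≤ ψ (n+k) 0 + ψ (n+k) 1 := by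
        have := hnn (n+k) 0; have := hnn (n+k) 1; linarith
      have hsle : (1+x)^k * (ψ (n+k) 0 + ψ (n+k) 1) ≤ 1 := by
        calc (1+x)^k * (ψ (n+k) 0 + ψ (n+k) 1)
            ≤ (1+x)^(n+k-1) * (ψ (n+k) 0 + ψ (n+k) 1) :=
              mul_le_mul_of_nonneg_right hmono hsum_nn
          _ = 1 := hsm
      have hsle' : ψ (n+k) 0 + ψ (n+k) 1 ≤ 1 / (1+x)^k := by
        rw [le_div_iff₀ hpos]; linarith [hsle]
      have habs : |ψ (n+k) 0 - ψ (n+k) 1| ≤ ψ (n+k) 0 + ψ (n+k) 1 := by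
        have h0 := hnn (n+k) 0; have h1 := hnn (n+k) 1
        rw [abs_le]; constructor <;> linarith
      calc |ψ n 0 - ψ n 1| = |1-x|^k * |ψ (n+k) 0 - ψ (n+k) 1| := by
            rw [h1, abs_mul, abs_pow]
        _ ≤ |1-x|^k * (1 / (1+x)^k) := by
            apply mul_le_mul_of_nonneg_left _ (by positivity)
            exact le_trans habs hsle'
        _ = r^k := by rw [hrdef, div_pow]; ring
    have htend : Filter.Tendsto (fun k : ℕ => r^k) Filter.atTop (nhds 0) :=
      tendsto_pow_atTop_nhds_zero_of_lt_one hr0 hr1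
    have : |ψ n 0 - ψ n 1| ≤ 0 := ge_of_tendsto' htend key
    have := abs_nonneg (ψ n 0 - ψ n 1)
    have h0 : |ψ n 0 - ψ n 1| = 0 := le_antisymm ‹_› ‹_›
    have := abs_eq_zero.mp h0
    linarith [sub_eq_zero.mp this]
  intro n hn i
  obtain ⟨m, rfl⟩ : ∃ m, n = m + 1 := ⟨n - 1, by omega⟩
  have heq := hd0 (m+1) (by omega)
  have hsum := hs m
  have hpow : (0:ℝ) < (1+x)^m := by positivity
  have hval : ψ (m+1) 0 = ((1+x)^m)⁻¹ / 2 := by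
    have h2 : (1+x)^m * (2 * ψ (m+1) 0) = 1 := by
      rw [heq] at hsum ⊢; linarith
    field_simp
    linarith
  have hz : (1 + x) ^ ((1:ℤ) - (m+1 : ℕ)) = ((1+x)^m)⁻¹ := by
    rw [show (1:ℤ) - ((m:ℕ)+1 : ℕ) = -(m:ℤ) by push_cast; ring, zpow_neg, zpow_natCast]
  rw [hz]
  fin_cases i
  · exact hval
  · show ψ (m+1) 1 = _
    rw [← heq]; exact hval
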